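/- arXiv:1004.3829 — 3 statements merged into one kernel-verified Lean document; each statement's English description precedes it below -/
import Mathlib

section
/- Let F be a field of characteristic 0, a ∈ F with a ≠ 0, and f = z² + y³ + x¹⁰ + a x⁷ y ∈ F[x,y,z]. Then the Tjurina number dim_F F[x,y,z]/(f, ∂f/∂x, ∂f/∂y, ∂f/∂z) equals 16. -/
/-!
With weights `(1/10, 1/3, 1/2)` for `(x, y, z)` the polynomial `z² + y³ + x¹⁰` is
quasi-homogeneous of degree one while `x⁷y` has degree `31/30`, so the Euler relation
`3x f_x + 10y f_y + 15z f_z - 30f = a x⁷y` puts `x⁷y` into the Tjurina ideal `I`. Together with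
`z`, `3y² + a x⁷` and `10x⁹ + 7a x⁶y` this reduces every monomial modulo `I` to the sixteen
monomials `xⁱ` (`i ≤ 8`) and `xⁱy` (`i ≤ 6`).

For their independence we use Macaulay's inverse systems: under the apolarity pairing
`⟨q, p⟩ = (p(∂) q)(0)` multiplication by a variable is adjoint to differentiation, so
`⟨q, -⟩` vanishes on `I` as soon as `g(∂) q = 0` for the four generators `g` of `I`. Each
standard monomial has such a `q` whose pairing with the standard monomials is diagonal.
-/

open MvPolynomial Finsupp

namespace Finsupp

variable {σ : Type*}

def factorial (t : σ →₀ ℕ) : ℕ := t.prod fun _ n => n.factorial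

theorem factorial_pos (t : σ →₀ ℕ) : 0 < t.factorial :=
  Finset.prod_pos fun _ _ => Nat.factorial_pos _

theorem factorial_add_single (t : σ →₀ ℕ) (i : σ) :
    (t + single i 1).factorial = (t i + 1) * t.factorial := by
  have hsplit (s : σ →₀ ℕ) : s.factorial = (s i).factorial * (s.erase i).factorial :=
    (mul_prod_erase' s i _ fun _ => Nat.factorial_zero).symm
  rw [hsplit, hsplit t, erase_add, erase_single, add_zero, add_apply, single_eq_same,
    Nat.factorial_succ, mul_assoc]

end Finsupp

namespace MvPolynomial

variable {σ R : Type*} [CommSemiring R]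

theorem pderiv_iterate_monomial (i : σ) (k : ℕ) (t : σ →₀ ℕ) (c : R) :
    (pderiv i)^[k] (monomial t c) = monomial (t - single i k) (c * (t i).descFactorial k) := by
  induction k with
  | zero => simp
  | succ k ih =>
    rw [Function.iterate_succ_apply', ih, pderiv_monomial, tsub_tsub, ← single_add,
      tsub_apply, single_eq_same, Nat.descFactorial_succ, Nat.cast_mul]
    congr 1
    ring

/-- The apolarity pairing `apolar q p = ∑ₜ t! qₜ pₜ = (p(∂) q)(0)`. -/
noncomputable def apolar : MvPolynomial σ R →ₗ[R] MvPolynomial σ R →ₗ[R] R :=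
  (basisMonomials σ R).constr R fun t => (t.factorial : R) • lcoeff R t

theorem apolar_monomial_one (t : σ →₀ ℕ) :
    apolar (monomial t (1 : R)) = (t.factorial : R) • lcoeff R t :=
  (basisMonomials σ R).constr_basis R _ t

theorem apolar_monomial_right (q : MvPolynomial σ R) (s : σ →₀ ℕ) (c : R) :
    apolar q (monomial s c) = coeff s q * s.factorial * c := by
  classical
  induction q using MvPolynomial.induction_on' with
  | add q r hq hr => simp only [map_add, LinearMap.add_apply, hq, hr, coeff_add, add_mul]
  | monomial t d =>
    rw [← mul_one d, ← smul_eq_mul, ← smul_monomial, map_smul, LinearMap.smul_apply,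
      apolar_monomial_one]
    by_cases h : t = s
    · subst h
      simp only [LinearMap.smul_apply, lcoeff_apply, coeff_monomial, if_pos, smul_eq_mul,
        coeff_smul, mul_one]
      ring
    · simp [coeff_monomial, h, Ne.symm h]

theorem apolar_X_mul (q p : MvPolynomial σ R) (i : σ) :
    apolar q (X i * p) = apolar (pderiv i q) p := by
  induction p using MvPolynomial.induction_on' with
  | add p r hp hr => simp only [mul_add, map_add, hp, hr]
  | monomial s c =>
    rw [X, monomial_mul, one_mul, add_comm, apolar_monomial_right, apolar_monomial_right,
      coeff_pderiv, factorial_add_single]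
    push_cast
    ring

theorem apolar_X_pow_mul (q p : MvPolynomial σ R) (i : σ) (k : ℕ) :
    apolar q (X i ^ k * p) = apolar ((pderiv i)^[k] q) p := by
  induction k generalizing q with
  | zero => simp
  | succ k ih => rw [pow_succ', mul_assoc, apolar_X_mul, ih, Function.iterate_succ_apply]

end MvPolynomial

theorem Ideal.restrictScalars_span_le_ker {K A M : Type*} [CommSemiring K] [CommSemiring A]
    [Algebra K A] [AddCommMonoid M] [Module K M] (φ : A →ₗ[K] M) {S : Set A}
    (h : ∀ g ∈ S, ∀ p, φ (g * p) = 0) :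
    (Ideal.span S).restrictScalars K ≤ LinearMap.ker φ := by
  intro r hr
  have key : ∀ p, φ (r * p) = 0 := by
    induction hr using Submodule.span_induction with
    | mem g hg => exact h g hg
    | zero => simp
    | add x y _ _ hx hy => intro p; rw [add_mul, map_add, hx, hy, add_zero]
    | smul x y _ hy => intro p; rw [smul_eq_mul, mul_assoc, mul_left_comm]; exact hy _
  simpa using key 1

theorem Ideal.Quotient.linearIndependent_mk_of_dual {K A ι : Type*} [Field K] [CommRing A]
    [Algebra K A] [Fintype ι] (I : Ideal A) (v : ι → A) (φ : ι → A →ₗ[K] K)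
    (hI : ∀ i, I.restrictScalars K ≤ LinearMap.ker (φ i)) (hdiag : ∀ i, φ i (v i) ≠ 0)
    (hoff : ∀ i j, i ≠ j → φ i (v j) = 0) :
    LinearIndependent K fun i => Ideal.Quotient.mkₐ K I (v i) := by
  rw [Fintype.linearIndependent_iff]
  intro g hg i
  have hmem : ∑ j, g j • v j ∈ I := by
    rw [← Ideal.Quotient.eq_zero_iff_mem, ← Ideal.Quotient.mkₐ_eq_mk K, map_sum]
    simpa only [map_smul] using hg
  have := hI i hmem
  rw [LinearMap.mem_ker, map_sum, Finset.sum_eq_single i (fun j _ hji => by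
    rw [map_smul, hoff i j (Ne.symm hji), smul_zero]) (by simp), map_smul, smul_eq_mul] at this
  exact (mul_eq_zero.mp this).resolve_right (hdiag i)

theorem Submodule.eq_top_of_one_mem_of_mul_mem {R A : Type*} [CommSemiring R] [Semiring A]
    [Algebra R A] {s : Set A} (hs : Algebra.adjoin R s = ⊤) (W : Submodule R A) (h1 : 1 ∈ W)
    (hmul : ∀ x ∈ s, ∀ w ∈ W, x * w ∈ W) : W = ⊤ := by
  rw [eq_top_iff]
  rintro a -
  have key : ∀ w ∈ W, a * w ∈ W := by
    have ha : a ∈ Algebra.adjoin R s := hs ▸ Algebra.mem_top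
    induction ha using Algebra.adjoin_induction with
    | mem x hx => exact hmul x hx
    | algebraMap r => intro w hw; rw [← Algebra.smul_def]; exact W.smul_mem r hw
    | add x y _ _ hx hy => intro w hw; rw [add_mul]; exact W.add_mem (hx w hw) (hy w hw)
    | mul x y _ _ hx hy => intro w hw; rw [mul_assoc]; exact hx _ (hy w hw)
  simpa using key 1 h1

theorem Submodule.span_eq_top_of_mul_mem {R A : Type*} [CommSemiring R] [Semiring A]
    [Algebra R A] {s t : Set A} (hs : Algebra.adjoin R s = ⊤) (h1 : 1 ∈ span R t)
    (hmul : ∀ x ∈ s, ∀ v ∈ t, x * v ∈ span R t) : span R t = ⊤ := by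
  have hspan : ∀ x ∈ s, ∀ w ∈ span R t, x * w ∈ span R t := by
    intro x hx w hw
    induction hw using Submodule.span_induction with
    | mem v hv => exact hmul x hx v hv
    | zero => simp
    | add v w _ _ hv hw => rw [mul_add]; exact add_mem hv hw
    | smul r w _ hw => rw [mul_smul_comm]; exact smul_mem _ r hw
  exact Submodule.eq_top_of_one_mem_of_mul_mem hs _ h1 hspan

theorem MvPolynomial.adjoin_range_mk_X {σ R : Type*} [CommRing R] (I : Ideal (MvPolynomial σ R)) :
    Algebra.adjoin R (Ideal.Quotient.mkₐ R I '' Set.range X) = ⊤ := by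
  rw [← AlgHom.map_adjoin, adjoin_range_X, Algebra.map_top, AlgHom.range_eq_top]
  exact Ideal.Quotient.mkₐ_surjective R I

noncomputable def tjurinaIdeal {R : Type*} [CommRing R] (f : MvPolynomial (Fin 3) R) :
    Ideal (MvPolynomial (Fin 3) R) :=
  Ideal.span {f, pderiv 0 f, pderiv 1 f, pderiv 2 f}

namespace WahlExample

variable {F : Type*} [Field F] (a : F)

noncomputable def wahlPoly : MvPolynomial (Fin 3) F :=
  X 2 ^ 2 + X 1 ^ 3 + X 0 ^ 10 + C a * X 0 ^ 7 * X 1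

theorem pderiv_zero_wahlPoly :
    pderiv 0 (wahlPoly a) = (10 : F) • X 0 ^ 9 + (7 * a) • (X 0 ^ 6 * X 1) := by
  simp [wahlPoly, smul_eq_C_mul, map_ofNat]
  ring

theorem pderiv_one_wahlPoly : pderiv 1 (wahlPoly a) = (3 : F) • X 1 ^ 2 + a • X 0 ^ 7 := by
  simp [wahlPoly, smul_eq_C_mul, map_ofNat]

theorem pderiv_two_wahlPoly : pderiv 2 (wahlPoly a) = (2 : F) • X 2 := by
  simp [wahlPoly, smul_eq_C_mul, map_ofNat]

noncomputable abbrev mkQ :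
    MvPolynomial (Fin 3) F →ₐ[F] MvPolynomial (Fin 3) F ⧸ tjurinaIdeal (wahlPoly a) :=
  Ideal.Quotient.mkₐ F _

theorem mkQ_wahlPoly : mkQ a (wahlPoly a) = 0 :=
  Ideal.Quotient.eq_zero_iff_mem.mpr (Ideal.subset_span (by simp))

theorem mkQ_pderiv_wahlPoly (i : Fin 3) : mkQ a (pderiv i (wahlPoly a)) = 0 :=
  Ideal.Quotient.eq_zero_iff_mem.mpr (Ideal.subset_span (by fin_cases i <;> simp))

theorem pderiv_zero_relation :
    (10 : F) • mkQ a (X 0) ^ 9 + (7 * a) • (mkQ a (X 0) ^ 6 * mkQ a (X 1)) = 0 := by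
  simpa only [pderiv_zero_wahlPoly, map_add, map_smul, map_mul, map_pow]
    using mkQ_pderiv_wahlPoly a 0

theorem pderiv_one_relation : (3 : F) • mkQ a (X 1) ^ 2 + a • mkQ a (X 0) ^ 7 = 0 := by
  simpa only [pderiv_one_wahlPoly, map_add, map_smul, map_pow] using mkQ_pderiv_wahlPoly a 1

theorem mkQ_X_zero_pow_seven_mul_X_one (ha : a ≠ 0) :
    mkQ a (X 0) ^ 7 * mkQ a (X 1) = 0 := by
  have euler : a • (X 0 ^ 7 * X 1) = (3 : F) • (X 0 * pderiv 0 (wahlPoly a))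
      + (10 : F) • (X 1 * pderiv 1 (wahlPoly a)) + (15 : F) • (X 2 * pderiv 2 (wahlPoly a))
      - (30 : F) • wahlPoly a := by
    rw [pderiv_zero_wahlPoly, pderiv_one_wahlPoly, pderiv_two_wahlPoly]
    simp only [wahlPoly, smul_eq_C_mul, map_mul, map_ofNat]
    ring
  have h := congrArg (mkQ a) euler
  simp only [map_sub, map_add, map_smul, map_mul, map_pow, mkQ_wahlPoly, mkQ_pderiv_wahlPoly,
    mul_zero, smul_zero, add_zero, sub_zero] at h
  exact (smul_eq_zero.mp h).resolve_left ha

def standardExps : Finset (ℕ × ℕ) := Finset.range 9 ×ˢ {0} ∪ Finset.range 7 ×ˢ {1}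

theorem mem_standardExps {e : ℕ × ℕ} :
    e ∈ standardExps ↔ e.2 = 0 ∧ e.1 ≤ 8 ∨ e.2 = 1 ∧ e.1 ≤ 6 := by
  rcases e with ⟨i, j⟩
  simp only [standardExps, Finset.mem_union, Finset.mem_product, Finset.mem_range,
    Finset.mem_singleton]
  omega

noncomputable def standardMonomial (e : ℕ × ℕ) :
    MvPolynomial (Fin 3) F ⧸ tjurinaIdeal (wahlPoly a) :=
  mkQ a (X 0 ^ e.1 * X 1 ^ e.2)

noncomputable abbrev standardSpan :
    Submodule F (MvPolynomial (Fin 3) F ⧸ tjurinaIdeal (wahlPoly a)) :=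
  Submodule.span F (Set.range fun e : standardExps => standardMonomial a e)

theorem standardMonomial_apply (i j : ℕ) :
    standardMonomial a (i, j) = mkQ a (X 0) ^ i * mkQ a (X 1) ^ j := by
  simp only [standardMonomial, map_mul, map_pow]

theorem mul_pow_mem_standardSpan {i j : ℕ} (h : (i, j) ∈ standardExps) :
    mkQ a (X 0) ^ i * mkQ a (X 1) ^ j ∈ standardSpan a := by
  rw [← standardMonomial_apply]
  exact Submodule.subset_span ⟨⟨(i, j), h⟩, rfl⟩

theorem pow_mul_mem_standardSpan (ha : a ≠ 0) (i : ℕ) :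
    mkQ a (X 0) ^ i * mkQ a (X 1) ∈ standardSpan a := by
  rcases le_or_gt i 6 with hi | hi
  · simpa using mul_pow_mem_standardSpan a (i := i) (j := 1) (by simp [mem_standardExps]; omega)
  · rw [show i = (i - 7) + 7 by omega, pow_add, mul_assoc,
      mkQ_X_zero_pow_seven_mul_X_one a ha, mul_zero]
    exact zero_mem _

/-- The hypotheses say `g(∂) q = 0` for the four generators `g`; the `z²`-term of `f(∂) q` is
left out of `hf` because it vanishes by `hz`. -/
theorem restrictScalars_tjurinaIdeal_le_ker_apolar (q : MvPolynomial (Fin 3) F)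
    (hf : (pderiv 1)^[3] q + (pderiv 0)^[10] q + a • pderiv 1 ((pderiv 0)^[7] q) = 0)
    (hx : (10 : F) • (pderiv 0)^[9] q + (7 * a) • pderiv 1 ((pderiv 0)^[6] q) = 0)
    (hy : (3 : F) • (pderiv 1)^[2] q + a • (pderiv 0)^[7] q = 0)
    (hz : pderiv 2 q = 0) :
    (tjurinaIdeal (wahlPoly a)).restrictScalars F ≤ LinearMap.ker (apolar q) := by
  have hz2 : (pderiv 2)^[2] q = 0 := by
    rw [Function.iterate_succ_apply, Function.iterate_one, hz, map_zero]
  refine Ideal.restrictScalars_span_le_ker _ ?_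
  rintro g (rfl | rfl | rfl | rfl) p
  · have hexp : wahlPoly a * p = X 2 ^ 2 * p + X 1 ^ 3 * p + X 0 ^ 10 * p
        + a • (X 0 ^ 7 * (X 1 * p)) := by
      simp only [wahlPoly, smul_eq_C_mul]; ring
    simpa only [hexp, map_add, map_smul, apolar_X_pow_mul, apolar_X_mul, hz2, map_zero,
      LinearMap.add_apply, LinearMap.smul_apply, LinearMap.zero_apply, zero_add]
      using congr(apolar $hf p)
  · have hexp : pderiv 0 (wahlPoly a) * p = (10 : F) • (X 0 ^ 9 * p)
        + (7 * a) • (X 0 ^ 6 * (X 1 * p)) := by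
      rw [pderiv_zero_wahlPoly, add_mul, smul_mul_assoc, smul_mul_assoc, mul_assoc]
    simpa only [hexp, map_add, map_smul, apolar_X_pow_mul, apolar_X_mul, map_zero,
      LinearMap.add_apply, LinearMap.smul_apply, LinearMap.zero_apply]
      using congr(apolar $hx p)
  · have hexp : pderiv 1 (wahlPoly a) * p = (3 : F) • (X 1 ^ 2 * p) + a • (X 0 ^ 7 * p) := by
      rw [pderiv_one_wahlPoly, add_mul, smul_mul_assoc, smul_mul_assoc]
    simpa only [hexp, map_add, map_smul, apolar_X_pow_mul, map_zero,
      LinearMap.add_apply, LinearMap.smul_apply, LinearMap.zero_apply]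
      using congr(apolar $hy p)
  · rw [pderiv_two_wahlPoly, smul_mul_assoc, map_smul, apolar_X_mul, hz, map_zero,
      LinearMap.zero_apply, smul_zero]

noncomputable def xyExp (i j : ℕ) : Fin 3 →₀ ℕ := single 0 i + single 1 j

@[simp] theorem xyExp_apply_zero (i j : ℕ) : xyExp i j 0 = i := by simp [xyExp]
@[simp] theorem xyExp_apply_one (i j : ℕ) : xyExp i j 1 = j := by simp [xyExp]
@[simp] theorem xyExp_apply_two (i j : ℕ) : xyExp i j 2 = 0 := by simp [xyExp]

theorem eq_xyExp_iff {t : Fin 3 →₀ ℕ} {i j : ℕ} :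
    t = xyExp i j ↔ t 0 = i ∧ t 1 = j ∧ t 2 = 0 := by
  constructor
  · rintro rfl; simp
  · rintro ⟨h0, h1, h2⟩
    ext k; fin_cases k <;> simp [h0, h1, h2]

@[simp] theorem xyExp_sub_single_zero (i j k : ℕ) : xyExp i j - single 0 k = xyExp (i - k) j := by
  rw [eq_xyExp_iff]; simp

@[simp] theorem xyExp_sub_single_one (i j k : ℕ) : xyExp i j - single 1 k = xyExp i (j - k) := by
  rw [eq_xyExp_iff]; simp

@[simp] theorem xyExp_sub_single_two (i j k : ℕ) : xyExp i j - single 2 k = xyExp i j := by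
  rw [eq_xyExp_iff]; simp

theorem xyExp_inj {i j k l : ℕ} : xyExp i j = xyExp k l ↔ i = k ∧ j = l := by
  rw [eq_xyExp_iff]; simp

theorem monomial_xyExp (i j : ℕ) : monomial (xyExp i j) (1 : F) = X 0 ^ i * X 1 ^ j := by
  rw [X_pow_eq_monomial, X_pow_eq_monomial, monomial_mul, one_mul, xyExp]

/-- The correction terms have exponents outside `standardExps`; their coefficients are forced by
`3∂_y² + a∂_x⁷` and `10∂_x⁹ + 7a∂_x⁶∂_y` annihilating the polynomial. -/
noncomputable def dualPoly (e : ℕ × ℕ) : MvPolynomial (Fin 3) F :=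
  if e = (7, 0) then monomial (xyExp 7 0) 1 + monomial (xyExp 0 2) (-(840 * a))
  else if e = (8, 0) then monomial (xyExp 8 0) 1 + monomial (xyExp 1 2) (-(6720 * a))
  else if e = (6, 1) then
    monomial (xyExp 6 1) 1 + monomial (xyExp 9 0) (-(a / 720)) + monomial (xyExp 2 2) (42 * a ^ 2)
  else monomial (xyExp e.1 e.2) 1

theorem coeff_dualPoly {e e' : ℕ × ℕ} (he : e ∈ standardExps) (he' : e' ∈ standardExps) :
    coeff (xyExp e'.1 e'.2) (dualPoly a e) = if e = e' then 1 else 0 := by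
  rcases e with ⟨i, j⟩
  rcases e' with ⟨k, l⟩
  simp only [mem_standardExps] at he he'
  simp only [dualPoly, Prod.mk.injEq]
  split_ifs <;> simp only [coeff_add, coeff_monomial, xyExp_inj] <;> split_ifs <;>
    first | omega | ring

theorem apolar_dualPoly {e e' : ℕ × ℕ} (he : e ∈ standardExps) (he' : e' ∈ standardExps) :
    apolar (dualPoly a e) (X 0 ^ e'.1 * X 1 ^ e'.2) =
      if e = e' then ((xyExp e'.1 e'.2).factorial : F) else 0 := by
  rw [← monomial_xyExp, apolar_monomial_right, coeff_dualPoly a he he']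
  split_ifs <;> simp

variable [CharZero F]

theorem mkQ_X_two : mkQ a (X 2) = 0 := by
  have h := mkQ_pderiv_wahlPoly a 2
  rwa [pderiv_two_wahlPoly, map_smul, smul_eq_zero, or_iff_right two_ne_zero] at h

theorem mkQ_X_zero_pow_ten (ha : a ≠ 0) : mkQ a (X 0) ^ 10 = 0 := by
  have h := congrArg (mkQ a (X 0) * ·) (pderiv_zero_relation a)
  simp only [mul_add, mul_smul_comm, mul_zero, ← pow_succ', ← mul_assoc] at h
  rw [mkQ_X_zero_pow_seven_mul_X_one a ha, smul_zero, add_zero, smul_eq_zero] at h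
  exact h.resolve_left (by norm_num)

theorem pow_mem_standardSpan (ha : a ≠ 0) (i : ℕ) : mkQ a (X 0) ^ i ∈ standardSpan a := by
  rcases lt_trichotomy i 9 with hi | rfl | hi
  · simpa using mul_pow_mem_standardSpan a (i := i) (j := 0) (by simp [mem_standardExps]; omega)
  · rw [← Submodule.smul_mem_iff _ (by norm_num : (10 : F) ≠ 0),
      eq_neg_of_add_eq_zero_left (pderiv_zero_relation a), ← neg_smul]
    exact Submodule.smul_mem _ _
      (by simpa using mul_pow_mem_standardSpan a (i := 6) (j := 1) (by simp [mem_standardExps]))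
  · rw [show i = 10 + (i - 10) by omega, pow_add, mkQ_X_zero_pow_ten a ha, zero_mul]
    exact zero_mem _

theorem pow_mul_sq_mem_standardSpan (ha : a ≠ 0) (i : ℕ) :
    mkQ a (X 0) ^ i * mkQ a (X 1) ^ 2 ∈ standardSpan a := by
  rw [← Submodule.smul_mem_iff _ (by norm_num : (3 : F) ≠ 0), ← mul_smul_comm,
    eq_neg_of_add_eq_zero_left (pderiv_one_relation a), ← neg_smul, mul_smul_comm, ← pow_add]
  exact Submodule.smul_mem _ _ (pow_mem_standardSpan a ha _)

theorem standardSpan_eq_top (ha : a ≠ 0) : standardSpan a = ⊤ := by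
  refine Submodule.span_eq_top_of_mul_mem (adjoin_range_mk_X _) ?_ ?_
  · simpa using mul_pow_mem_standardSpan a (i := 0) (j := 0) (by simp [mem_standardExps])
  rintro _ ⟨_, ⟨k, rfl⟩, rfl⟩ _ ⟨⟨⟨i, j⟩, he⟩, rfl⟩
  rw [mem_standardExps] at he
  change _ * standardMonomial a (i, j) ∈ _
  rw [standardMonomial_apply]
  fin_cases k
  · change mkQ a (X 0) * _ ∈ standardSpan a
    rcases he with ⟨rfl, -⟩ | ⟨rfl, -⟩
    · convert pow_mem_standardSpan a ha (i + 1) using 1; ring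
    · convert pow_mul_mem_standardSpan a ha (i + 1) using 1; ring
  · change mkQ a (X 1) * _ ∈ standardSpan a
    rcases he with ⟨rfl, -⟩ | ⟨rfl, -⟩
    · convert pow_mul_mem_standardSpan a ha i using 1; ring
    · convert pow_mul_sq_mem_standardSpan a ha i using 1; ring
  · change mkQ a (X 2) * _ ∈ standardSpan a
    rw [mkQ_X_two, zero_mul]
    exact zero_mem _

theorem ker_apolar_dualPoly {e : ℕ × ℕ} (he : e ∈ standardExps) :
    (tjurinaIdeal (wahlPoly a)).restrictScalars F ≤ LinearMap.ker (apolar (dualPoly a e)) := by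
  rcases e with ⟨i, j⟩
  simp only [mem_standardExps] at he
  simp only [dualPoly, Prod.mk.injEq]
  split_ifs with h7 h8 h15
  pick_goal 4
  · have hi : i ≤ 6 := by omega
    have hj : j ≤ 1 := by omega
    apply restrictScalars_tjurinaIdeal_le_ker_apolar <;> simp [pderiv_iterate_monomial, hi, hj]
    omega
  all_goals
    apply restrictScalars_tjurinaIdeal_le_ker_apolar <;>
      simp [iterate_map_add, pderiv_iterate_monomial, smul_monomial, Nat.descFactorial]
    all_goals simp only [← map_neg, ← map_add, monomial_eq_zero]; ring

theorem linearIndependent_standardMonomial :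
    LinearIndependent F fun e : standardExps => standardMonomial a e := by
  refine Ideal.Quotient.linearIndependent_mk_of_dual (tjurinaIdeal (wahlPoly a))
    (fun e : standardExps => X 0 ^ e.1.1 * X 1 ^ e.1.2) (fun e => apolar (dualPoly a e))
    (fun e => ker_apolar_dualPoly a e.2) (fun e => ?_) (fun e e' hne => ?_)
  · rw [apolar_dualPoly a e.2 e.2, if_pos rfl]
    exact_mod_cast (factorial_pos _).ne'
  · rw [apolar_dualPoly a e.2 e'.2, if_neg (Subtype.coe_ne_coe.mpr hne)]

theorem finrank_quotient_tjurinaIdeal (ha : a ≠ 0) :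
    Module.finrank F (MvPolynomial (Fin 3) F ⧸ tjurinaIdeal (wahlPoly a)) = 16 := by
  rw [Module.finrank_eq_card_basis
      (Module.Basis.mk (linearIndependent_standardMonomial a) (standardSpan_eq_top a ha).ge),
    Fintype.card_coe]
  rfl

end WahlExample

/-- For `f = z² + y³ + x¹⁰ + a·x⁷y` with `a ≠ 0` over a field `F` of characteristic zero,
the Tjurina number `dim_F F[x,y,z]/(f, ∂f/∂x, ∂f/∂y, ∂f/∂z)` equals `16`. -/
theorem tjurina_wahl_example (F : Type) [Field F] [CharZero F] (a : F) (ha : a ≠ 0) :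
    letI f : MvPolynomial (Fin 3) F :=
      X 2 ^ 2 + X 1 ^ 3 + X 0 ^ 10 + C a * X 0 ^ 7 * X 1
    Module.finrank F
      (MvPolynomial (Fin 3) F ⧸
        Ideal.span {f, pderiv 0 f, pderiv 1 f, pderiv 2 f}) = 16 :=
  WahlExample.finrank_quotient_tjurinaIdeal a ha
end

section
/- Let F be a field of characteristic 0 containing a primitive 30th root of unity. Let X̃ = Spec F[u,v,w,t]/(u³⁰ + v³⁰ + w³⁰ + t u²¹ v¹⁰) with the map to S = Spec F[t]. Let G = μ₃ × μ₁₀ × μ₁₅ act on X̃ by scalar multiplication of roots of unity on u, v, w respectively. Then the assignment x = u³, y = v¹⁰, z = w¹⁵ induces an isomorphism of the invariant ring (F[u,v,w,t]/(u³⁰+v³⁰+w³⁰+tu²¹v¹⁰))^G with F[x,y,z,t]/(z² + y³ + x¹⁰ + t x⁷ y). -/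
/-!
The substitution `ψ : x ↦ u³, y ↦ v¹⁰, z ↦ w¹⁵, t ↦ t` is injective, sends the relation
`z² + y³ + x¹⁰ + t·x⁷y` to the equation of `X̃`, and lands in the `G`-invariant polynomials.
Conversely the Reynolds operator (averaging over `G`, possible as `|G| = 450` is invertible in `F`)
maps every polynomial into the image of `ψ`: on a monomial `u^a v^b w^c t^d` it multiplies by a
character sum over `μ₃ × μ₁₀ × μ₁₅`, which vanishes unless `3 ∣ a`, `10 ∣ b` and `15 ∣ c`.
Being linear over the image of `ψ`, the Reynolds operator carries invariants of the quotient back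
to the image of `ψ`, and shows that `ψ f ∈ (ψ r)` forces `f ∈ (r)`.
-/

open MvPolynomial

section Reynolds

variable {K A P G ι : Type*} [Field K] [CommRing A] [Algebra K A] [CommRing P] [Algebra K P]
  [Fintype ι] {ψ : A →ₐ[K] P} {σ : G → P →ₐ[K] P} {e : ι → G}

theorem sum_apply_eq_card_smul_of_fixed (hfix : ∀ g a, σ g (ψ a) = ψ a) (a : A) :
    ∑ i, σ (e i) (ψ a) = (Fintype.card ι : K) • ψ a := by
  simp [hfix, Nat.cast_smul_eq_nsmul]

theorem mem_span_singleton_of_map_mem_span_singleton (hψ : Function.Injective ψ)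
    (hfix : ∀ g a, σ g (ψ a) = ψ a) (hrey : ∀ p, ∑ i, σ (e i) p ∈ ψ.range)
    (hcard : (Fintype.card ι : K) ≠ 0) {r f : A} (hf : ψ f ∈ Ideal.span {ψ r}) :
    f ∈ Ideal.span {r} := by
  obtain ⟨h, hh⟩ := Ideal.mem_span_singleton'.mp hf
  obtain ⟨a, ha⟩ := hrey h
  have key : ψ ((Fintype.card ι : K) • f) = ψ (a * r) :=
    calc ψ ((Fintype.card ι : K) • f) = ∑ i, σ (e i) (ψ f) := by
          rw [map_smul, sum_apply_eq_card_smul_of_fixed hfix]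
      _ = (∑ i, σ (e i) h) * ψ r := by
          simp only [← hh, map_mul, hfix, Finset.sum_mul]
      _ = ψ (a * r) := by rw [← ha, map_mul]; rfl
  refine Ideal.mem_span_singleton'.mpr ⟨(Fintype.card ι : K)⁻¹ • a, ?_⟩
  rw [smul_mul_assoc, ← hψ key, inv_smul_smul₀ hcard]

theorem range_quotientMapₐ_eq_setOf_forall_fixed (hfix : ∀ g a, σ g (ψ a) = ψ a)
    (hrey : ∀ p, ∑ i, σ (e i) p ∈ ψ.range) (hcard : (Fintype.card ι : K) ≠ 0)
    {I : Ideal P} {J : Ideal A} (H : J ≤ I.comap ψ) (act : G → (P ⧸ I →ₐ[K] P ⧸ I))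
    (hact : ∀ g p, act g (Ideal.Quotient.mkₐ K I p) = Ideal.Quotient.mkₐ K I (σ g p)) :
    Set.range (Ideal.quotientMapₐ I ψ H) = {q | ∀ g, act g q = q} := by
  ext q
  constructor
  · rintro ⟨x, rfl⟩ g
    obtain ⟨a, rfl⟩ := Ideal.Quotient.mk_surjective x
    rw [Ideal.quotient_map_mkₐ, hact, hfix]
  · intro hq
    obtain ⟨p, rfl⟩ := Ideal.Quotient.mkₐ_surjective K I q
    obtain ⟨a, ha⟩ := hrey p
    have key : (Fintype.card ι : K) • Ideal.Quotient.mkₐ K I p = Ideal.Quotient.mkₐ K I (ψ a) :=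
      calc (Fintype.card ι : K) • Ideal.Quotient.mkₐ K I p
          = ∑ i, act (e i) (Ideal.Quotient.mkₐ K I p) := by
            rw [Finset.sum_congr rfl fun i _ => hq (e i), Finset.sum_const, Finset.card_univ,
              Nat.cast_smul_eq_nsmul]
        _ = Ideal.Quotient.mkₐ K I (ψ a) := by
            simp only [hact, ← map_sum]; rw [← ha]; rfl
    refine ⟨Ideal.Quotient.mk J ((Fintype.card ι : K)⁻¹ • a), ?_⟩
    rw [Ideal.quotient_map_mkₐ, map_smul, map_smul, ← key, inv_smul_smul₀ hcard]

end Reynolds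

namespace MvPolynomial

variable {σ R : Type*} [CommSemiring R]

noncomputable def scaleVars (w : σ → R) : MvPolynomial σ R →ₐ[R] MvPolynomial σ R :=
  aeval fun i => C (w i) * X i

noncomputable def expandPow (n : σ → ℕ) : MvPolynomial σ R →ₐ[R] MvPolynomial σ R :=
  aeval fun i => X i ^ n i

@[simp]
theorem expandPow_X (n : σ → ℕ) (i : σ) : expandPow (R := R) n (X i) = X i ^ n i :=
  aeval_X _ _

theorem scaleVars_monomial (w : σ → R) (d : σ →₀ ℕ) (c : R) :
    scaleVars w (monomial d c) = (d.prod fun i k => w i ^ k) • monomial d c := by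
  rw [scaleVars, aeval_monomial, monomial_eq, smul_eq_C_mul]
  simp only [mul_pow, Finsupp.prod_mul, ← C_pow, algebraMap_eq]
  rw [← map_finsuppProd C]
  ring

theorem sum_scaleVars_mem {ι : Type*} [Fintype ι] {S : Subalgebra R (MvPolynomial σ R)}
    (w : ι → σ → R)
    (h : ∀ d, (∑ i, d.prod fun j k => w i j ^ k) = 0 ∨ ∀ c, monomial d c ∈ S)
    (p : MvPolynomial σ R) : ∑ i, scaleVars (w i) p ∈ S := by
  induction p using MvPolynomial.induction_on' with
  | monomial d c =>
    simp only [scaleVars_monomial, ← Finset.sum_smul]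
    rcases h d with h0 | hS
    · rw [h0, zero_smul]; exact S.zero_mem
    · exact S.smul_mem (hS c) _
  | add p q hp hq =>
    simp only [map_add, Finset.sum_add_distrib]
    exact add_mem hp hq

theorem scaleVars_expandPow {n : σ → ℕ} {w : σ → R} (hw : ∀ i, w i ^ n i = 1)
    (p : MvPolynomial σ R) :
    scaleVars w (expandPow n p) = expandPow n p := by
  rw [← AlgHom.comp_apply]
  congr 1
  ext i
  simp [scaleVars, mul_pow, ← C_pow, hw]

variable [Fintype σ] (n : σ → ℕ)

theorem expandPow_monomial (d : σ →₀ ℕ) (c : R) :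
    expandPow n (monomial d c) = monomial (Finsupp.equivFunOnFinite.symm n * d) c := by
  rw [expandPow, aeval_monomial, monomial_eq, Finsupp.prod_pow, Finsupp.prod_pow]
  simp [← pow_mul, mul_comm]

theorem expandPow_injective (hn : ∀ i, n i ≠ 0) :
    Function.Injective (expandPow (R := R) n) := by
  have hexp : Function.Injective (Finsupp.equivFunOnFinite.symm n * · : (σ →₀ ℕ) → σ →₀ ℕ) :=
    fun d d' h => Finsupp.ext fun i => Nat.eq_of_mul_eq_mul_left (Nat.pos_of_ne_zero (hn i))
      (by simpa using DFunLike.congr_fun h i)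
  have hmap : ∀ p : MvPolynomial σ R,
      expandPow n p = AddMonoidAlgebra.mapDomain (Finsupp.equivFunOnFinite.symm n * ·) p := by
    intro p
    induction p using MvPolynomial.induction_on' with
    | monomial d c =>
      rw [expandPow_monomial, ← single_eq_monomial, ← single_eq_monomial,
        AddMonoidAlgebra.mapDomain_single]
    | add p q hp hq => rw [map_add, hp, hq, AddMonoidAlgebra.mapDomain_add]
  intro p q h
  rw [hmap, hmap] at h
  exact AddMonoidAlgebra.mapDomain_injective hexp h

theorem monomial_mem_range_expandPow {d : σ →₀ ℕ} (hd : ∀ i, n i ∣ d i) (c : R) :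
    monomial d c ∈ (expandPow n).range := by
  refine ⟨monomial (Finsupp.equivFunOnFinite.symm fun i => d i / n i) c, ?_⟩
  change expandPow n _ = _
  rw [expandPow_monomial]
  congr
  ext i
  simp [Nat.mul_div_cancel' (hd i)]

end MvPolynomial

theorem IsPrimitiveRoot.sum_pow_pow_eq_zero {R : Type*} [CommRing R] [IsDomain R] {ζ : R}
    {n k : ℕ} (hζ : IsPrimitiveRoot ζ n) (hk : ¬ n ∣ k) : ∑ a : Fin n, (ζ ^ (a : ℕ)) ^ k = 0 := by
  have hne : ζ ^ k - 1 ≠ 0 := sub_ne_zero.mpr fun h => hk (hζ.pow_eq_one_iff_dvd k |>.mp h)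
  have hgeom : (∑ a ∈ Finset.range n, (ζ ^ k) ^ a) * (ζ ^ k - 1) = 0 := by
    rw [geom_sum_mul, pow_right_comm, hζ.pow_eq_one, one_pow, sub_self]
  simp only [pow_right_comm ζ _ k]
  rw [Fin.sum_univ_eq_sum_range (fun a => (ζ ^ k) ^ a)]
  exact (mul_eq_zero.mp hgeom).resolve_right hne

section

variable {F : Type*} [Field F]

theorem aeval_vecCons_C_mul_X_eq_scaleVars (a b c : F) :
    aeval ![C a * X 0, C b * X 1, C c * X 2, X 3] = scaleVars (R := F) ![a, b, c, 1] := by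
  rw [scaleVars]
  congr 1
  funext j
  fin_cases j <;> simp

theorem expandPow_relation :
    expandPow ![3, 10, 15, 1]
        (X 2 ^ 2 + X 1 ^ 3 + X 0 ^ 10 + X 3 * X 0 ^ 7 * X 1 : MvPolynomial (Fin 4) F) =
      X 0 ^ 30 + X 1 ^ 30 + X 2 ^ 30 + X 3 * X 0 ^ 21 * X 1 ^ 10 := by
  simp only [map_add, map_mul, map_pow, expandPow_X, Matrix.cons_val]
  ring

theorem sum_scaleVars_rootsOfUnity_mem_range {ζ : F} (hζ : IsPrimitiveRoot ζ 30)
    (p : MvPolynomial (Fin 4) F) :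
    ∑ x : Fin 3 × Fin 10 × Fin 15,
      scaleVars ![(ζ ^ 10) ^ (x.1 : ℕ), (ζ ^ 3) ^ (x.2.1 : ℕ), (ζ ^ 2) ^ (x.2.2 : ℕ), 1] p
      ∈ (expandPow ![3, 10, 15, 1]).range := by
  refine sum_scaleVars_mem _ (fun d => ?_) p
  have hsum : (∑ x : Fin 3 × Fin 10 × Fin 15, d.prod fun j k =>
        ![(ζ ^ 10) ^ (x.1 : ℕ), (ζ ^ 3) ^ (x.2.1 : ℕ), (ζ ^ 2) ^ (x.2.2 : ℕ), 1] j ^ k) =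
      (∑ a : Fin 3, ((ζ ^ 10) ^ (a : ℕ)) ^ d 0) *
        ((∑ b : Fin 10, ((ζ ^ 3) ^ (b : ℕ)) ^ d 1) * ∑ c : Fin 15, ((ζ ^ 2) ^ (c : ℕ)) ^ d 2) := by
    simp only [Finsupp.prod_pow, Fin.prod_univ_four, Fintype.sum_prod_type, Finset.sum_mul_sum]
    simp [mul_assoc, Finset.mul_sum]
  by_cases hd : 3 ∣ d 0 ∧ 10 ∣ d 1 ∧ 15 ∣ d 2
  · obtain ⟨h0, h1, h2⟩ := hd
    exact .inr (monomial_mem_range_expandPow _ fun i => by fin_cases i <;> simp [h0, h1, h2])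
  · refine .inl (hsum.trans ?_)
    rcases not_and_or.mp hd with h0 | h12
    · rw [(hζ.pow (by norm_num) (by norm_num : 30 = 10 * 3)).sum_pow_pow_eq_zero h0, zero_mul]
    rcases not_and_or.mp h12 with h1 | h2
    · rw [(hζ.pow (by norm_num) (by norm_num : 30 = 3 * 10)).sum_pow_pow_eq_zero h1, zero_mul,
        mul_zero]
    · rw [(hζ.pow (by norm_num) (by norm_num : 30 = 2 * 15)).sum_pow_pow_eq_zero h2, mul_zero,
        mul_zero]

end

abbrev RootsOfUnityTriple (F : Type*) [Field F] :=
  {g : Fˣ × Fˣ × Fˣ // g.1 ^ 3 = 1 ∧ g.2.1 ^ 10 = 1 ∧ g.2.2 ^ 15 = 1}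

namespace RootsOfUnityTriple

variable {F : Type*} [Field F]

noncomputable def scale (g : RootsOfUnityTriple F) :
    MvPolynomial (Fin 4) F →ₐ[F] MvPolynomial (Fin 4) F :=
  aeval ![C (g.val.1 : F) * X 0, C (g.val.2.1 : F) * X 1, C (g.val.2.2 : F) * X 2, X 3]

theorem scale_expandPow (g : RootsOfUnityTriple F) (p : MvPolynomial (Fin 4) F) :
    g.scale (expandPow ![3, 10, 15, 1] p) = expandPow ![3, 10, 15, 1] p := by
  rw [scale, aeval_vecCons_C_mul_X_eq_scaleVars]
  refine scaleVars_expandPow (fun i => ?_) p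
  obtain ⟨_, h0, h1, h2⟩ := g
  fin_cases i <;> simp [← Units.val_pow_eq_pow_val, h0, h1, h2]

def ofPrimitiveRoot {ζ : F} (hζ : IsPrimitiveRoot ζ 30) (x : Fin 3 × Fin 10 × Fin 15) :
    RootsOfUnityTriple F :=
  have hη : IsPrimitiveRoot (Units.mk0 ζ (hζ.ne_zero (by norm_num))) 30 :=
    IsPrimitiveRoot.coe_units_iff.mp hζ
  ⟨((Units.mk0 ζ _ ^ 10) ^ (x.1 : ℕ), (Units.mk0 ζ _ ^ 3) ^ (x.2.1 : ℕ),
      (Units.mk0 ζ _ ^ 2) ^ (x.2.2 : ℕ)),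
    by rw [pow_right_comm, (hη.pow (by norm_num) (by norm_num : 30 = 10 * 3)).pow_eq_one, one_pow],
    by rw [pow_right_comm, (hη.pow (by norm_num) (by norm_num : 30 = 3 * 10)).pow_eq_one, one_pow],
    by rw [pow_right_comm, (hη.pow (by norm_num) (by norm_num : 30 = 2 * 15)).pow_eq_one, one_pow]⟩

theorem sum_scale_ofPrimitiveRoot_mem_range {ζ : F} (hζ : IsPrimitiveRoot ζ 30)
    (p : MvPolynomial (Fin 4) F) :
    ∑ x, (ofPrimitiveRoot hζ x).scale p ∈ (expandPow ![3, 10, 15, 1]).range := by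
  convert sum_scaleVars_rootsOfUnity_mem_range hζ p using 3 with x
  rw [scale, aeval_vecCons_C_mul_X_eq_scaleVars]
  simp [ofPrimitiveRoot]

end RootsOfUnityTriple

/-- Let `F` be a field of characteristic zero containing a primitive 30th root of unity,
`X̃ = Spec F[u,v,w,t]/(u³⁰ + v³⁰ + w³⁰ + t·u²¹v¹⁰)`, and let
`G = μ₃ × μ₁₀ × μ₁₅` act on `X̃` by scalar multiplication by roots of unity on `u, v, w`
(fixing `t`).  Then the assignment `x = u³`, `y = v¹⁰`, `z = w¹⁵`, `t = t` induces an
isomorphism of `F[x,y,z,t]/(z² + y³ + x¹⁰ + t·x⁷y)` onto the invariant ring of the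
`G`-action: the induced algebra map is injective with image the ring of `G`-invariants. -/
theorem invariant_ring_iso (F : Type) [Field F] [CharZero F]
    (ζ : F) (hζ : IsPrimitiveRoot ζ 30) :
    letI P := MvPolynomial (Fin 4) F
    letI gen : P := X 0 ^ 30 + X 1 ^ 30 + X 2 ^ 30 + X 3 * X 0 ^ 21 * X 1 ^ 10
    letI Q := P ⧸ Ideal.span {gen}
    letI π : P →ₐ[F] Q := Ideal.Quotient.mkₐ F (Ideal.span {gen})
    letI G := {g : Fˣ × Fˣ × Fˣ // g.1 ^ 3 = 1 ∧ g.2.1 ^ 10 = 1 ∧ g.2.2 ^ 15 = 1}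
    letI scale : G → (P →ₐ[F] P) := fun g =>
      aeval ![C ((g.val.1 : F)) * X 0, C ((g.val.2.1 : F)) * X 1,
        C ((g.val.2.2 : F)) * X 2, X 3]
    -- for any action on the quotient induced by the scaling action on `F[u,v,w,t]` …
    ∀ act : G → (Q →ₐ[F] Q), (∀ g p, act g (π p) = π (scale g p)) →
    -- … the map `x ↦ u³, y ↦ v¹⁰, z ↦ w¹⁵, t ↦ t` identifies
    -- `F[x,y,z,t]/(z² + y³ + x¹⁰ + t·x⁷y)` with the ring of `G`-invariants of `Q`:
    ∃ Φ : (MvPolynomial (Fin 4) F ⧸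
        Ideal.span {(X 2 ^ 2 + X 1 ^ 3 + X 0 ^ 10 + X 3 * X 0 ^ 7 * X 1 :
          MvPolynomial (Fin 4) F)}) →ₐ[F] Q,
      (Φ (Ideal.Quotient.mk _ (X 0)) = π (X 0 ^ 3)) ∧
      (Φ (Ideal.Quotient.mk _ (X 1)) = π (X 1 ^ 10)) ∧
      (Φ (Ideal.Quotient.mk _ (X 2)) = π (X 2 ^ 15)) ∧
      (Φ (Ideal.Quotient.mk _ (X 3)) = π (X 3)) ∧
      Function.Injective Φ ∧
      Set.range Φ = {q : Q | ∀ g : G, act g q = q} := by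
  intro act hact
  have hcard : (Fintype.card (Fin 3 × Fin 10 × Fin 15) : F) ≠ 0 := by simp
  refine ⟨Ideal.quotientMapₐ _ (expandPow ![3, 10, 15, 1]) ?H, ?_, ?_, ?_, ?_,
    Ideal.quotientMap_injective' (H := ?H) fun f hf => ?inj,
    range_quotientMapₐ_eq_setOf_forall_fixed RootsOfUnityTriple.scale_expandPow
      (RootsOfUnityTriple.sum_scale_ofPrimitiveRoot_mem_range hζ) hcard ?H act hact⟩
  case H =>
    rw [Ideal.span_singleton_le_iff_mem, Ideal.mem_comap, expandPow_relation]
    exact Ideal.mem_span_singleton_self _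
  case inj =>
    refine mem_span_singleton_of_map_mem_span_singleton
      (expandPow_injective _ fun i => by fin_cases i <;> simp) RootsOfUnityTriple.scale_expandPow
      (RootsOfUnityTriple.sum_scale_ofPrimitiveRoot_mem_range hζ) hcard ?_
    rwa [expandPow_relation]
  all_goals simp
end

section
/- Let F be an algebraic field extension of ℚ and R = F[x,y,z]/(z² + y³ + x¹⁰ + x⁷y). Granting that NK₀(R) ≅ H¹_cdh(R, Ω¹) ⊗_ℚ tℚ[t] and NK₋₁(R) ≅ H¹_cdh(R, O) ⊗_ℚ tℚ[t], and that H¹_cdh(R, Ω¹) = 0 while H¹_cdh(R, O) ≅ F, conclude: K₀(R[t]) ≅ K₀(R) but K₀(R[t₁,t₂]) ≇ K₀(R); in particular the answer to Bass' question (does K₀(R) = K₀(R[t]) imply K₀(R) = K₀(R[t₁,t₂])?) is negative. -/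
set_option synthInstance.maxHeartbeats 1000000

open CategoryTheory MvPolynomial

/-!
`K₀(R) → K₀(R[t])` has the retraction induced by `t ↦ 0`, whose kernel `NK₀(R)` vanishes because
`H¹_cdh(R, Ω¹) = 0`; hence it is bijective. Then `K₀(R[t₁,t₂]) ≅ K₀(R) ⊕ (F ⊗ tℚ[t] ⊗ Ω¹_{ℚ[t]})`
with `K₀(R)` as the first summand, and the second summand is nonzero since tensor products of
nonzero vector spaces over `ℚ` are nonzero, so `K₀(R) → K₀(R[t₁,t₂])` is not surjective.
-/

theorem Function.bijective_of_leftInverse_of_injective {α β : Type*} {f : α → β} {g : β → α}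
    (hgf : Function.LeftInverse g f) (hg : Function.Injective g) : Function.Bijective f :=
  ⟨hgf.injective, (hgf.rightInverse_of_injective hg).surjective⟩

theorem Function.not_surjective_of_equiv_prod {A B T : Type*} [Nonempty A] [Zero T]
    [Nontrivial T] (f : A → B) (e : B ≃ A × T) (he : ∀ x, e (f x) = (x, 0)) :
    ¬ Function.Surjective f := by
  obtain ⟨a⟩ := ‹Nonempty A›
  obtain ⟨t, ht⟩ := exists_ne (0 : T)
  intro hf
  obtain ⟨x, hx⟩ := hf (e.symm (a, t))
  have : (x, (0 : T)) = (a, t) := by rw [← he, hx, e.apply_symm_apply]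
  exact ht congr($this.2).symm

theorem CategoryTheory.Functor.bijective_map_of_ker_map_retraction_eq_bot {C : Type*} [Category C]
    (G : C ⥤ AddCommGrpCat) {X Y : C} {i : X ⟶ Y} {r : Y ⟶ X} (hir : i ≫ r = 𝟙 X)
    (hker : AddMonoidHom.ker (G.map r).hom = ⊥) : Function.Bijective (G.map i) := by
  refine Function.bijective_of_leftInverse_of_injective (g := G.map r) (fun x => ?_)
    ((AddMonoidHom.ker_eq_bot_iff _).mp hker)
  rw [← ConcreteCategory.comp_apply, ← G.map_comp, hir, G.map_id, ConcreteCategory.id_apply]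

theorem CommRingCat.ofHom_C_comp_ofHom_evalRingHom_zero (R : Type*) [CommRing R] :
    CommRingCat.ofHom Polynomial.C ≫ CommRingCat.ofHom (Polynomial.evalRingHom 0) =
      𝟙 (CommRingCat.of R) :=
  CommRingCat.hom_ext (RingHom.ext fun _ => Polynomial.eval_C)

instance Polynomial.nontrivial_span_X {R : Type*} [CommRing R] [Nontrivial R] :
    Nontrivial (Ideal.span {(Polynomial.X : Polynomial R)}) :=
  ⟨⟨⟨_, Ideal.mem_span_singleton_self _⟩, 0, fun h => Polynomial.X_ne_zero congr($h.1)⟩⟩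

instance KaehlerDifferential.nontrivial_polynomial {R : Type*} [CommRing R] [Nontrivial R] :
    Nontrivial Ω[Polynomial R⁄R] :=
  (KaehlerDifferential.polynomialEquiv R).toEquiv.nontrivial

theorem bass_question_negative_answer_general (F : Type) [Field F] [CharZero F]
    (K₀ Kminus1 : CommRingCat ⥤ AddCommGrpCat)
    (H1O H1Ω : Type) [AddCommGroup H1O] [Module ℚ H1O] [AddCommGroup H1Ω] [Module ℚ H1Ω] :
    letI Rring := MvPolynomial (Fin 3) F ⧸
      Ideal.span {(X 2 ^ 2 + X 1 ^ 3 + X 0 ^ 10 + X 0 ^ 7 * X 1 : MvPolynomial (Fin 3) F)}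
    letI R : CommRingCat := CommRingCat.of Rring
    letI Rt : CommRingCat := CommRingCat.of (Polynomial Rring)
    letI Rtt : CommRingCat := CommRingCat.of (MvPolynomial (Fin 2) Rring)
    letI ι₁ : R ⟶ Rt := CommRingCat.ofHom Polynomial.C
    letI ι₂ : R ⟶ Rtt := CommRingCat.ofHom MvPolynomial.C
    letI ev₁ : Rt ⟶ R := CommRingCat.ofHom (Polynomial.evalRingHom 0)
    letI V := (Ideal.span {(Polynomial.X : Polynomial ℚ)} :
      Ideal (Polynomial ℚ))  -- `tℚ[t]`
    letI W := Ω[Polynomial ℚ⁄ℚ]  -- `Ω¹_{ℚ[t]}`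
    -- granting `H¹_cdh(R, Ω¹) = 0` and `H¹_cdh(R, O) ≅ F`:
    Subsingleton H1Ω →
    Nonempty (H1O ≃ₗ[ℚ] F) →
    -- granting `NK₀(R) ≅ H¹_cdh(R, Ω¹) ⊗_ℚ tℚ[t]` and `NKminus1(R) ≅ H¹_cdh(R, O) ⊗_ℚ tℚ[t]`:
    Nonempty ((AddMonoidHom.ker (K₀.map ev₁).hom) ≃+ TensorProduct ℚ H1Ω V) →
    Nonempty ((AddMonoidHom.ker (Kminus1.map ev₁).hom) ≃+ TensorProduct ℚ H1O V) →
    -- granting that if `NK₀(R) = 0` then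
    -- `K₀(R[t₁,t₂]) ≅ K₀(R) ⊕ (NKminus1(R) ⊗_ℚ Ω¹_{ℚ[t]})` compatibly with the canonical map:
    (AddMonoidHom.ker (K₀.map ev₁).hom = ⊥ →
      ∃ e : K₀.obj Rtt ≃+ (K₀.obj R) × TensorProduct ℚ (TensorProduct ℚ H1O V) W,
        ∀ x, e (K₀.map ι₂ x) = (x, 0)) →
    -- conclusion: `K₀(R) = K₀(R[t])` but `K₀(R) ≠ K₀(R[t₁,t₂])`:
    Function.Bijective (K₀.map ι₁) ∧ ¬ Function.Bijective (K₀.map ι₂) := by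
  intro _ ⟨eF⟩ ⟨eNK₀⟩ _ hsplit
  have hNK₀ := @AddSubgroup.eq_bot_of_subsingleton _ _ _ eNK₀.toEquiv.subsingleton
  have : Nontrivial H1O := eF.toEquiv.nontrivial
  obtain ⟨e, he⟩ := hsplit hNK₀
  exact ⟨K₀.bijective_map_of_ker_map_retraction_eq_bot
      (CommRingCat.ofHom_C_comp_ofHom_evalRingHom_zero _) hNK₀,
    fun h => Function.not_surjective_of_equiv_prod _ e.toEquiv he h.2⟩

/-- Let `F` be an algebraic field extension of `ℚ` and
`R = F[x,y,z]/(z² + y³ + x¹⁰ + x⁷y)`.  Granting (for functors `K₀`, `Kminus1` to abelian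
groups) that `NK₀(R) ≅ H¹_cdh(R, Ω¹) ⊗_ℚ tℚ[t]` and `NKminus1(R) ≅ H¹_cdh(R, O) ⊗_ℚ tℚ[t]`,
that `H¹_cdh(R, Ω¹) = 0` while `H¹_cdh(R, O) ≅ F`, and that when `NK₀(R) = 0` one has
`K₀(R[t₁,t₂]) ≅ K₀(R) ⊕ (NKminus1(R) ⊗_ℚ Ω¹_{ℚ[t]})` compatibly with the canonical map,
we conclude: the canonical map `K₀(R) → K₀(R[t])` is an isomorphism, but the canonical
map `K₀(R) → K₀(R[t₁,t₂])` is not; so the answer to Bass' question is negative. -/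
theorem bass_question_negative_answer (F : Type) [Field F] [CharZero F]
    [Algebra.IsAlgebraic ℚ F]
    (K₀ Kminus1 : CommRingCat ⥤ AddCommGrpCat)
    (H1O H1Ω : Type) [AddCommGroup H1O] [Module ℚ H1O] [AddCommGroup H1Ω] [Module ℚ H1Ω] :
    letI Rring := MvPolynomial (Fin 3) F ⧸
      Ideal.span {(X 2 ^ 2 + X 1 ^ 3 + X 0 ^ 10 + X 0 ^ 7 * X 1 : MvPolynomial (Fin 3) F)}
    letI R : CommRingCat := CommRingCat.of Rring
    letI Rt : CommRingCat := CommRingCat.of (Polynomial Rring)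
    letI Rtt : CommRingCat := CommRingCat.of (MvPolynomial (Fin 2) Rring)
    letI ι₁ : R ⟶ Rt := CommRingCat.ofHom Polynomial.C
    letI ι₂ : R ⟶ Rtt := CommRingCat.ofHom MvPolynomial.C
    letI ev₁ : Rt ⟶ R := CommRingCat.ofHom (Polynomial.evalRingHom 0)
    letI V := (Ideal.span {(Polynomial.X : Polynomial ℚ)} :
      Ideal (Polynomial ℚ))  -- `tℚ[t]`
    letI W := Ω[Polynomial ℚ⁄ℚ]  -- `Ω¹_{ℚ[t]}`
    -- granting `H¹_cdh(R, Ω¹) = 0` and `H¹_cdh(R, O) ≅ F`: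
    Subsingleton H1Ω →
    Nonempty (H1O ≃ₗ[ℚ] F) →
    -- granting `NK₀(R) ≅ H¹_cdh(R, Ω¹) ⊗_ℚ tℚ[t]` and `NKminus1(R) ≅ H¹_cdh(R, O) ⊗_ℚ tℚ[t]`:
    Nonempty ((AddMonoidHom.ker (K₀.map ev₁).hom) ≃+ TensorProduct ℚ H1Ω V) →
    Nonempty ((AddMonoidHom.ker (Kminus1.map ev₁).hom) ≃+ TensorProduct ℚ H1O V) →
    -- granting that if `NK₀(R) = 0` then
    -- `K₀(R[t₁,t₂]) ≅ K₀(R) ⊕ (NKminus1(R) ⊗_ℚ Ω¹_{ℚ[t]})` compatibly with the canonical map: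
    (AddMonoidHom.ker (K₀.map ev₁).hom = ⊥ →
      ∃ e : K₀.obj Rtt ≃+ (K₀.obj R) × TensorProduct ℚ (TensorProduct ℚ H1O V) W,
        ∀ x, e (K₀.map ι₂ x) = (x, 0)) →
    -- conclusion: `K₀(R) = K₀(R[t])` but `K₀(R) ≠ K₀(R[t₁,t₂])`:
    Function.Bijective (K₀.map ι₁) ∧ ¬ Function.Bijective (K₀.map ι₂) :=
  bass_question_negative_answer_general F K₀ Kminus1 H1O H1Ω
end
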